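/- Fix n ≥ 1 and let x_k := cos((2k−1)π/(2n)), k = 1, …, n, be the Chebyshev nodes in [−1,1]. Let l_k denote the Lagrange fundamental polynomials for these nodes and L_n f(x) := ∑_{k=1}^n f(x_k) l_k(x). Then for all f, g : [−1,1] → ℝ and all x ∈ [−1,1], |L_n(f·g)(x) − L_n f(x)·L_n g(x)| ≤ osc_{L_n}(f)·osc_{L_n}(g)·∑_{1 ≤ k < m ≤ n} |l_k(x)·l_m(x)|, where osc_{L_n}(f) := max{|f(x_k) − f(x_m)| : 1 ≤ k < m ≤ n} and similarly for g. -/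

import Mathlib

/-!
Distinct nodes make the fundamental polynomials sum to `1`, so with `a k = f (x k)`,
`b k = g (x k)`, `w k = l k x` the difference `L(fg) - Lf ⬝ Lg` equals
`(∑ w) (∑ a b w) - (∑ a w) (∑ b w)`. The weighted Korkine identity rewrites this as
`∑_{k<m} (a k - a m) (b k - b m) w k w m`, and each difference is bounded by the oscillation.
-/

/-- The `k`-th Chebyshev node for `n` nodes: `cos((2k-1)π/(2n))`. -/
noncomputable def chebNode (n k : ℕ) : ℝ :=
  Real.cos ((2 * k - 1) * Real.pi / (2 * n))

/-- Lagrange fundamental polynomial at the Chebyshev nodes (nodes indexed `1, …, n`). -/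
noncomputable def lagBasis (n k : ℕ) (t : ℝ) : ℝ :=
  ∏ m ∈ (Finset.Icc 1 n).erase k, (t - chebNode n m) / (chebNode n k - chebNode n m)

/-- The Lagrange interpolation operator at the Chebyshev nodes. -/
noncomputable def lagOp (n : ℕ) (f : ℝ → ℝ) (t : ℝ) : ℝ :=
  ∑ k ∈ Finset.Icc 1 n, f (chebNode n k) * lagBasis n k t

open Finset

theorem Finset.sum_sum_eq_sum_lt_add_sum_diag {ι M : Type*} [LinearOrder ι] [AddCommMonoid M]
    (s : Finset ι) (G : ι → ι → M) :
    ∑ i ∈ s, ∑ j ∈ s, G i j =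
      ∑ p ∈ s ×ˢ s with p.1 < p.2, (G p.1 p.2 + G p.2 p.1) + ∑ i ∈ s, G i i := by
  have hgt : ∑ p ∈ s ×ˢ s with p.2 < p.1, G p.1 p.2 = ∑ p ∈ s ×ˢ s with p.1 < p.2, G p.2 p.1 :=
    sum_equiv (Equiv.prodComm ι ι) (by simp [and_comm]) (by simp)
  have heq : ∑ p ∈ s ×ˢ s with p.1 = p.2, G p.1 p.2 = ∑ i ∈ s, G i i := by
    rw [← sum_diag s (fun p => G p.1 p.2)]
    exact sum_congr (by ext ⟨i, j⟩; simp; grind) fun _ _ => rfl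
  have hne : ∑ p ∈ s ×ˢ s with ¬ p.1 < p.2, G p.1 p.2 =
      ∑ p ∈ s ×ˢ s with p.2 < p.1, G p.1 p.2 + ∑ p ∈ s ×ˢ s with p.1 = p.2, G p.1 p.2 := by
    rw [← sum_union (disjoint_filter.2 fun p _ h => h.ne'), ← filter_or]
    exact sum_congr (filter_congr fun p _ => by grind) fun _ _ => rfl
  rw [← sum_product' (f := G), sum_add_distrib, ← hgt, ← heq, add_assoc, ← hne,
    sum_filter_add_sum_filter_not]

theorem Finset.weighted_korkine_identity {ι R : Type*} [LinearOrder ι] [CommRing R]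
    (s : Finset ι) (a b w : ι → R) :
    (∑ i ∈ s, w i) * ∑ i ∈ s, a i * b i * w i - (∑ i ∈ s, a i * w i) * ∑ i ∈ s, b i * w i =
      ∑ p ∈ s ×ˢ s with p.1 < p.2, (a p.1 - a p.2) * (b p.1 - b p.2) * (w p.1 * w p.2) := by
  have hexpand : (∑ i ∈ s, w i) * ∑ i ∈ s, a i * b i * w i
      - (∑ i ∈ s, a i * w i) * ∑ i ∈ s, b i * w i =
      ∑ i ∈ s, ∑ j ∈ s, (a j - a i) * b j * (w i * w j) := by
    simp only [sum_mul_sum, ← sum_sub_distrib]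
    exact sum_congr rfl fun i _ => sum_congr rfl fun j _ => by ring
  rw [hexpand, sum_sum_eq_sum_lt_add_sum_diag]
  simp only [sub_self, zero_mul, sum_const_zero, add_zero]
  exact sum_congr rfl fun p _ => by ring

theorem abs_sum_mul_mul_le {ι R : Type*} [CommRing R] [LinearOrder R] [IsStrictOrderedRing R]
    (s : Finset ι) (u v w : ι → R) {A B : R}
    (hu : ∀ i ∈ s, |u i| ≤ A) (hv : ∀ i ∈ s, |v i| ≤ B) :
    |∑ i ∈ s, u i * v i * w i| ≤ A * B * ∑ i ∈ s, |w i| := by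
  rw [mul_sum]
  refine (abs_sum_le_sum_abs _ _).trans (sum_le_sum fun i hi => ?_)
  rw [abs_mul, abs_mul]
  have hA : 0 ≤ A := (abs_nonneg _).trans (hu i hi)
  gcongr
  exacts [hu i hi, hv i hi]

theorem chebNode_injOn (n : ℕ) : Set.InjOn (chebNode n) (Finset.Icc 1 n) := by
  intro k hk m hm h
  simp only [coe_Icc, Set.mem_Icc] at hk hm
  have hn : (0 : ℝ) < n := by exact_mod_cast hk.1.trans hk.2
  have hangle : ∀ j : ℕ, 1 ≤ j → j ≤ n →
      (2 * (j : ℝ) - 1) * Real.pi / (2 * n) ∈ Set.Icc 0 Real.pi := by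
    intro j h1 h2
    have h1 : (1 : ℝ) ≤ j := by exact_mod_cast h1
    have h2 : (j : ℝ) ≤ n := by exact_mod_cast h2
    constructor
    · exact div_nonneg (mul_nonneg (by linarith) Real.pi_pos.le) (by positivity)
    · rw [div_le_iff₀ (by positivity)]
      nlinarith [Real.pi_pos]
  have h := Real.injOn_cos (hangle k hk.1 hk.2) (hangle m hm.1 hm.2) h
  rw [div_left_inj' (by positivity), mul_left_inj' Real.pi_ne_zero] at h
  exact_mod_cast (by linarith : (k : ℝ) = m)

theorem lagBasis_eq_eval_basis (n k : ℕ) (x : ℝ) :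
    lagBasis n k x = (Lagrange.basis (Finset.Icc 1 n) (chebNode n) k).eval x := by
  rw [Lagrange.basis, Polynomial.eval_prod, lagBasis]
  refine prod_congr rfl fun m _ => ?_
  simp [Lagrange.basisDivisor, div_eq_inv_mul, mul_comm]

theorem sum_lagBasis {n : ℕ} (hn : 0 < n) (x : ℝ) : ∑ k ∈ Finset.Icc 1 n, lagBasis n k x = 1 := by
  simp_rw [lagBasis_eq_eval_basis, ← Polynomial.eval_finsetSum]
  rw [Lagrange.sum_basis (chebNode_injOn n) ⟨1, mem_Icc.2 ⟨le_rfl, hn⟩⟩, Polynomial.eval_one]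

theorem lagOp_mul_sub_lagOp_mul_lagOp {n : ℕ} (hn : 0 < n) (f g : ℝ → ℝ) (x : ℝ) :
    lagOp n (fun t => f t * g t) x - lagOp n f x * lagOp n g x =
      ∑ p ∈ Finset.Icc 1 n ×ˢ Finset.Icc 1 n with p.1 < p.2,
        (f (chebNode n p.1) - f (chebNode n p.2)) * (g (chebNode n p.1) - g (chebNode n p.2)) *
          (lagBasis n p.1 x * lagBasis n p.2 x) := by
  have h := weighted_korkine_identity (Finset.Icc 1 n) (fun k => f (chebNode n k))
    (fun k => g (chebNode n k)) (fun k => lagBasis n k x)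
  rwa [sum_lagBasis hn, one_mul] at h

/-- The oscillation `osc_{L_n}(f)` of `f` over the Chebyshev nodes. -/
noncomputable def nodeOsc (n : ℕ) (f : ℝ → ℝ) : ℝ :=
  sSup {d : ℝ | ∃ k m : ℕ, 1 ≤ k ∧ k < m ∧ m ≤ n ∧ d = |f (chebNode n k) - f (chebNode n m)|}

theorem abs_sub_le_nodeOsc {n : ℕ} (f : ℝ → ℝ) {p : ℕ × ℕ}
    (hp : p ∈ (Finset.Icc 1 n ×ˢ Finset.Icc 1 n).filter (fun p => p.1 < p.2)) :
    |f (chebNode n p.1) - f (chebNode n p.2)| ≤ nodeOsc n f := by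
  simp only [mem_filter, mem_product, mem_Icc] at hp
  have hbdd : BddAbove {d : ℝ | ∃ k m : ℕ, 1 ≤ k ∧ k < m ∧ m ≤ n ∧
      d = |f (chebNode n k) - f (chebNode n m)|} := by
    refine (((Finset.Icc 1 n ×ˢ Finset.Icc 1 n).image
      fun q => |f (chebNode n q.1) - f (chebNode n q.2)|).bddAbove).mono ?_
    rintro d ⟨k, m, hk, hkm, hm, rfl⟩
    exact mem_coe.2 <| mem_image.2
      ⟨(k, m), mem_product.2 ⟨mem_Icc.2 ⟨hk, by omega⟩, mem_Icc.2 ⟨by omega, hm⟩⟩, rfl⟩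
  exact le_csSup hbdd ⟨p.1, p.2, hp.1.1.1, hp.2, hp.1.2.2, rfl⟩

theorem lagrange_chebyshev_gruss_osc (n : ℕ)
    (f g : ℝ → ℝ) (x : ℝ) :
    |lagOp n (fun t => f t * g t) x - lagOp n f x * lagOp n g x| ≤
      sSup {d : ℝ | ∃ k m : ℕ, 1 ≤ k ∧ k < m ∧ m ≤ n ∧
          d = |f (chebNode n k) - f (chebNode n m)|} *
      sSup {d : ℝ | ∃ k m : ℕ, 1 ≤ k ∧ k < m ∧ m ≤ n ∧
          d = |g (chebNode n k) - g (chebNode n m)|} *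
      ∑ p ∈ (Finset.Icc 1 n ×ˢ Finset.Icc 1 n).filter (fun p => p.1 < p.2),
        |lagBasis n p.1 x * lagBasis n p.2 x| := by
  rcases Nat.eq_zero_or_pos n with rfl | hn
  · simp [lagOp]
  rw [lagOp_mul_sub_lagOp_mul_lagOp hn]
  exact abs_sum_mul_mul_le _ _ _ _ (fun p hp => abs_sub_le_nodeOsc f hp)
    (fun p hp => abs_sub_le_nodeOsc g hp)
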